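/- arXiv:1701.05030 — 2 statements merged into one kernel-verified Lean document; each statement's English description precedes it below -/
import Mathlib

section
/- For every integer n ≥ 1, La(n, ∨, P_2) = La(n, ∧, P_2) = C(n, ⌊n/2⌋): the maximum, over all families ℱ ⊆ 2^[n] containing no copy of ∨ (respectively, no copy of ∧), of the number of copies of P_2 in ℱ (i.e. of pairs of distinct sets A, B ∈ ℱ with A ⊆ B) equals the binomial coefficient C(n, ⌊n/2⌋). -/
open Classical Finset

noncomputable section

/-- `G` is a copy of the finite poset `α` among the subsets of `[n]`:
there is a bijection `φ` from `α` onto `G` such that `x ≤ y` implies `φ x ⊆ φ y`. -/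
def IsCopy (α : Type) [PartialOrder α] [Fintype α] {n : ℕ}
    (G : Finset (Finset (Fin n))) : Prop :=
  ∃ φ : α → Finset (Fin n), Function.Injective φ ∧
    Finset.image φ Finset.univ = G ∧ ∀ x y : α, x ≤ y → φ x ⊆ φ y

/-- `copyCount α F` is the number of copies of the poset `α` in the family `F`,
copies being counted as subfamilies of `F`. -/
def copyCount (α : Type) [PartialOrder α] [Fintype α] {n : ℕ}
    (F : Finset (Finset (Fin n))) : ℕ :=
  (F.powerset.filter fun G => IsCopy α G).card

/-- `La n P Q`: the maximum number of copies of `Q` in a `P`-free family of subsets of `[n]`. -/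
def La (n : ℕ) (P Q : Type) [PartialOrder P] [Fintype P]
    [PartialOrder Q] [Fintype Q] : ℕ :=
  ((Finset.univ : Finset (Finset (Finset (Fin n)))).filter fun F =>
    copyCount P F = 0).sup (copyCount Q)

/-- `La2 n P₁ P₂ Q`: the maximum number of copies of `Q` in a family of subsets of `[n]`
that is both `P₁`-free and `P₂`-free. -/
def La2 (n : ℕ) (P₁ P₂ Q : Type) [PartialOrder P₁] [Fintype P₁]
    [PartialOrder P₂] [Fintype P₂] [PartialOrder Q] [Fintype Q] : ℕ :=
  ((Finset.univ : Finset (Finset (Finset (Fin n)))).filter fun F =>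
    copyCount P₁ F = 0 ∧ copyCount P₂ F = 0).sup (copyCount Q)

/-- the full `k`-th level of `2^[n]`. -/
def level (n k : ℕ) : Finset (Finset (Fin n)) :=
  Finset.univ.filter fun A => A.card = k

/-- `γ^r_{i,j}(F)`: the number of `r`-element subfamilies of `F` whose intersection has
size `i` and whose union has size `j`. -/
def gammaCount (r n i j : ℕ) (F : Finset (Finset (Fin n))) : ℕ :=
  (F.powerset.filter fun G =>
    G.card = r ∧ (G.inf id).card = i ∧ (G.sup id).card = j).card

/-- `β^r_i(F)`: the number of `r`-element subfamilies of `F` whose intersection has size `i`. -/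
def betaCount (r n i : ℕ) (F : Finset (Finset (Fin n))) : ℕ :=
  (F.powerset.filter fun G => G.card = r ∧ (G.inf id).card = i).card

/-- the complete multi-level poset `K_{r 0, …, r (s-1)}`: level `i` has `r i` elements,
and every element of level `i` is below every element of level `j` whenever `i < j`. -/
def KP {s : ℕ} (r : Fin s → ℕ) : Type := Σ i, Fin (r i)

namespace KP

variable {s : ℕ} {r : Fin s → ℕ}

def le (x y : KP r) : Prop := x = y ∨ x.1 < y.1

instance : PartialOrder (KP r) where
  le := KP.le
  le_refl x := Or.inl rfl
  le_trans x y z hxy hyz := by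
    rcases hxy with rfl | h
    · exact hyz
    · rcases hyz with rfl | h'
      · exact Or.inr h
      · exact Or.inr (h.trans h')
  le_antisymm x y hxy hyx := by
    rcases hxy with rfl | h
    · rfl
    · rcases hyx with rfl | h'
      · rfl
      · exact absurd (h.trans h') (lt_irrefl _)

instance : Fintype (KP r) := inferInstanceAs (Fintype (Σ i, Fin (r i)))

end KP

/-- the chain (totally ordered poset) with `k` elements. -/
abbrev PChain (k : ℕ) := Fin k

/-- `∨_r = K_{1,r}` -/
abbrev VeePoset (r : ℕ) := KP ![1, r]

/-- `∧_r = K_{r,1}` -/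
abbrev WedgePoset (r : ℕ) := KP ![r, 1]

/-- the generalized diamond `D_r = K_{1,r,1}` -/
abbrev DiamondPoset (r : ℕ) := KP ![1, r, 1]

/-- the butterfly poset `B = K_{2,2}` -/
abbrev Butterfly := KP ![2, 2]

/-- the height `l(Q)` of a finite poset: the number of elements of a longest chain. -/
def height (Q : Type) [PartialOrder Q] [Fintype Q] : ℕ :=
  ((Finset.univ : Finset (Finset Q)).filter fun C : Finset Q =>
    IsChain (· ≤ ·) (↑C : Set Q)).sup Finset.card


/-- `Q₁ ⊗_r Q₂`: disjoint copies of `Q₁` and `Q₂` with an `r`-element antichain in between;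
everything in `Q₁` is below the middle elements and below everything in `Q₂`,
and the middle elements are below everything in `Q₂`. -/
inductive Otimes (Q₁ Q₂ : Type) (r : ℕ) : Type
  | bot : Q₁ → Otimes Q₁ Q₂ r
  | mid : Fin r → Otimes Q₁ Q₂ r
  | top : Q₂ → Otimes Q₁ Q₂ r

namespace Otimes

variable {Q₁ Q₂ : Type} {r : ℕ}

def le [PartialOrder Q₁] [PartialOrder Q₂] : Otimes Q₁ Q₂ r → Otimes Q₁ Q₂ r → Prop
  | bot a, bot b => a ≤ b
  | bot _, mid _ => True
  | bot _, top _ => True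
  | mid i, mid j => i = j
  | mid _, top _ => True
  | top a, top b => a ≤ b
  | _, _ => False

instance [PartialOrder Q₁] [PartialOrder Q₂] : PartialOrder (Otimes Q₁ Q₂ r) where
  le := Otimes.le
  le_refl x := by cases x <;> simp [Otimes.le]
  le_trans x y z hxy hyz := by
    cases x <;> cases y <;> cases z <;> simp_all [Otimes.le] <;>
      first
        | exact le_trans hxy hyz
        | trivial
  le_antisymm x y hxy hyx := by
    cases x <;> cases y <;> simp_all [Otimes.le] <;>
      first
        | exact le_antisymm hxy hyx
        | rfl

instance [Fintype Q₁] [Fintype Q₂] : Fintype (Otimes Q₁ Q₂ r) :=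
  Fintype.ofEquiv (Q₁ ⊕ Fin r ⊕ Q₂)
    { toFun := fun x => match x with
        | Sum.inl a => bot a
        | Sum.inr (Sum.inl i) => mid i
        | Sum.inr (Sum.inr b) => top b
      invFun := fun x => match x with
        | bot a => Sum.inl a
        | mid i => Sum.inr (Sum.inl i)
        | top b => Sum.inr (Sum.inr b)
      left_inv := fun x => by rcases x with a | (i | b) <;> rfl
      right_inv := fun x => by cases x <;> rfl }

end Otimes

/-- `Q ⊕ r`: the poset obtained from `Q` by adding an antichain of `r` new elements,
each above every element of `Q`. -/
inductive Oplus (Q : Type) (r : ℕ) : Type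
  | base : Q → Oplus Q r
  | new : Fin r → Oplus Q r

namespace Oplus

variable {Q : Type} {r : ℕ}

def le [PartialOrder Q] : Oplus Q r → Oplus Q r → Prop
  | base a, base b => a ≤ b
  | base _, new _ => True
  | new i, new j => i = j
  | new _, base _ => False

instance [PartialOrder Q] : PartialOrder (Oplus Q r) where
  le := Oplus.le
  le_refl x := by cases x <;> simp [Oplus.le]
  le_trans x y z hxy hyz := by
    cases x <;> cases y <;> cases z <;> simp_all [Oplus.le] <;>
      first
        | exact le_trans hxy hyz
        | trivial
  le_antisymm x y hxy hyx := by
    cases x <;> cases y <;> simp_all [Oplus.le] <;>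
      first
        | exact le_antisymm hxy hyx
        | rfl

instance [Fintype Q] : Fintype (Oplus Q r) :=
  Fintype.ofEquiv (Q ⊕ Fin r)
    { toFun := fun x => match x with
        | Sum.inl a => base a
        | Sum.inr i => new i
      invFun := fun x => match x with
        | base a => Sum.inl a
        | new i => Sum.inr i
      left_inv := fun x => by rcases x with a | i <;> rfl
      right_inv := fun x => by cases x <;> rfl }

end Oplus

/-- the poset `N`: four elements `a, b, c, d` with `a ≤ c`, `b ≤ c`, `b ≤ d`
and no other nontrivial relations. -/
inductive NPoset : Type
  | a | b | c | d
  deriving DecidableEq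

instance : Fintype NPoset :=
  Fintype.ofList [NPoset.a, NPoset.b, NPoset.c, NPoset.d] (fun x => by cases x <;> simp)

namespace NPoset

def le : NPoset → NPoset → Prop := fun x y =>
  x = y ∨ (x = a ∧ y = c) ∨ (x = b ∧ y = c) ∨ (x = b ∧ y = d)

instance : DecidableRel le := fun x y => by unfold le; infer_instance

theorem le_refl' : ∀ x : NPoset, le x x := by decide
theorem le_trans' : ∀ x y z : NPoset, le x y → le y z → le x z := by decide
theorem le_antisymm' : ∀ x y : NPoset, le x y → le y x → x = y := by decide

instance : PartialOrder NPoset :=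
  { le := le, le_refl := le_refl', le_trans := le_trans', le_antisymm := le_antisymm' }

end NPoset

/-- the poset `B⁺`: five elements with `a < c`, `a < e`, `b < c`, `b < d`, `d < e`
(and the relation `b < e` forced by transitivity). -/
inductive BPlusPoset : Type
  | a | b | c | d | e
  deriving DecidableEq

instance : Fintype BPlusPoset :=
  Fintype.ofList [BPlusPoset.a, BPlusPoset.b, BPlusPoset.c, BPlusPoset.d, BPlusPoset.e] (fun x => by cases x <;> simp)

namespace BPlusPoset

def le : BPlusPoset → BPlusPoset → Prop := fun x y =>
  x = y ∨ (x = a ∧ y = c) ∨ (x = a ∧ y = e) ∨ (x = b ∧ y = c) ∨ (x = b ∧ y = d) ∨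
    (x = b ∧ y = e) ∨ (x = d ∧ y = e)

instance : DecidableRel le := fun x y => by unfold le; infer_instance

theorem le_refl' : ∀ x : BPlusPoset, le x x := by decide
theorem le_trans' : ∀ x y z : BPlusPoset, le x y → le y z → le x z := by decide
theorem le_antisymm' : ∀ x y : BPlusPoset, le x y → le y x → x = y := by decide

instance : PartialOrder BPlusPoset :=
  { le := le, le_refl := le_refl', le_trans := le_trans', le_antisymm := le_antisymm' }

end BPlusPoset

/-- the poset `B⁺⁺`: five elements with `a, b < c, d` and `d < e`
(hence also `a < e` and `b < e`). -/
inductive BPlusPlusPoset : Type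
  | a | b | c | d | e
  deriving DecidableEq

instance : Fintype BPlusPlusPoset :=
  Fintype.ofList [BPlusPlusPoset.a, BPlusPlusPoset.b, BPlusPlusPoset.c, BPlusPlusPoset.d, BPlusPlusPoset.e] (fun x => by cases x <;> simp)

namespace BPlusPlusPoset

def le : BPlusPlusPoset → BPlusPlusPoset → Prop := fun x y =>
  x = y ∨ (x = a ∧ y = c) ∨ (x = a ∧ y = d) ∨ (x = a ∧ y = e) ∨ (x = b ∧ y = c) ∨
    (x = b ∧ y = d) ∨ (x = b ∧ y = e) ∨ (x = d ∧ y = e)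

instance : DecidableRel le := fun x y => by unfold le; infer_instance

theorem le_refl' : ∀ x : BPlusPlusPoset, le x x := by decide
theorem le_trans' : ∀ x y z : BPlusPlusPoset, le x y → le y z → le x z := by decide
theorem le_antisymm' : ∀ x y : BPlusPlusPoset, le x y → le y x → x = y := by decide

instance : PartialOrder BPlusPlusPoset :=
  { le := le, le_refl := le_refl', le_trans := le_trans', le_antisymm := le_antisymm' }

end BPlusPlusPoset

/-- the binary entropy function `h(x) = -x log₂ x - (1-x) log₂ (1-x)`. -/
def binEnt (x : ℝ) : ℝ := -x * Real.logb 2 x - (1 - x) * Real.logb 2 (1 - x)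

/-! In a `∨`-free family every set has at most one proper superset in the family, so sending
a comparable pair `A ⊂ B` to its bottom `A` is injective. Its image is an antichain: if `A ⊂ A'`
were both bottoms, with `A' ⊂ B'`, then `A` would have the two proper supersets `A'` and `B'`.
Sperner's theorem bounds the antichain by `C(n, ⌊n/2⌋)`; `∧`-free families are handled dually
through tops. The bound is attained by the middle level together with `[n]`, and dually by `∅`
together with the level `⌈n/2⌉`. -/

instance {s : ℕ} {r : Fin s → ℕ} : DecidableEq (KP r) :=
  inferInstanceAs (DecidableEq (Σ i, Fin (r i)))

theorem KP.le_of_fst_lt {s : ℕ} {r : Fin s → ℕ} {x y : KP r} (h : x.1 < y.1) : x ≤ y :=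
  Or.inr h

theorem Fin.eq_zero_and_eq_one_of_lt : ∀ {i j : Fin 2}, i < j → i = 0 ∧ j = 1 := by
  decide

namespace VeePoset

def bot : VeePoset 2 := ⟨0, ⟨0, by decide⟩⟩
def left : VeePoset 2 := ⟨1, ⟨0, by decide⟩⟩
def right : VeePoset 2 := ⟨1, ⟨1, by decide⟩⟩

end VeePoset

namespace WedgePoset

def left : WedgePoset 2 := ⟨0, ⟨0, by decide⟩⟩
def right : WedgePoset 2 := ⟨0, ⟨1, by decide⟩⟩
def top : WedgePoset 2 := ⟨1, ⟨0, by decide⟩⟩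

end WedgePoset

section Copies

variable {n : ℕ}

theorem copyCount_eq_zero_iff {α : Type} [PartialOrder α] [Fintype α]
    {F : Finset (Finset (Fin n))} : copyCount α F = 0 ↔ ∀ G ⊆ F, ¬IsCopy α G := by
  simp [copyCount, filter_eq_empty_iff]

theorem isCopy_chain_two_iff {G : Finset (Finset (Fin n))} :
    IsCopy (PChain 2) G ↔ ∃ X Y, X ⊂ Y ∧ G = {X, Y} := by
  constructor
  · rintro ⟨φ, hφ, rfl, hmono⟩
    refine ⟨φ 0, φ 1, (hmono 0 1 (by decide)).ssubset_of_ne (hφ.ne (by decide)), ?_⟩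
    ext D
    simp [Fin.exists_fin_two, eq_comm]
  · rintro ⟨X, Y, hXY, rfl⟩
    refine ⟨![X, Y], ?_, ?_, ?_⟩
    · intro i j
      fin_cases i <;> fin_cases j <;> simp [hXY.ne, hXY.ne']
    · ext D
      simp [Fin.exists_fin_two, eq_comm]
    · intro i j hij
      fin_cases i <;> fin_cases j <;> simp_all [hXY.subset]

theorem isCopy_vee_of_ssubset {A B C : Finset (Fin n)} (hAB : A ⊂ B) (hAC : A ⊂ C)
    (hBC : B ≠ C) : IsCopy (VeePoset 2) {A, B, C} := by
  set φ : VeePoset 2 → Finset (Fin n) :=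
    fun x => if x.1 = 0 then A else if (x.2 : ℕ) = 0 then B else C
  have himage : Finset.image φ univ = {A, B, C} := by
    ext D
    simp only [mem_image, mem_univ, true_and, mem_insert, mem_singleton]
    constructor
    · rintro ⟨x, rfl⟩
      simp only [φ]
      split_ifs <;> simp
    · rintro (rfl | rfl | rfl)
      exacts [⟨VeePoset.bot, rfl⟩, ⟨VeePoset.left, rfl⟩, ⟨VeePoset.right, rfl⟩]
  refine ⟨φ, ?_, himage, ?_⟩
  · have hcard : (Finset.image φ univ).card = (univ : Finset (VeePoset 2)).card := by
      rw [himage, card_eq_three.mpr ⟨A, B, C, hAB.ne, hAC.ne, hBC, rfl⟩]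
      rfl
    simpa using Finset.card_image_iff.mp hcard
  · rintro x y (rfl | hxy)
    · exact subset_rfl
    · obtain ⟨hx, hy⟩ := Fin.eq_zero_and_eq_one_of_lt hxy
      simp only [φ, hx, hy, if_true, one_ne_zero, if_false]
      split_ifs
      exacts [hAB.subset, hAC.subset]

theorem isCopy_wedge_of_ssubset {A B C : Finset (Fin n)} (hAC : A ⊂ C) (hBC : B ⊂ C)
    (hAB : A ≠ B) : IsCopy (WedgePoset 2) {A, B, C} := by
  set φ : WedgePoset 2 → Finset (Fin n) :=
    fun x => if x.1 = 1 then C else if (x.2 : ℕ) = 0 then A else B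
  have himage : Finset.image φ univ = {A, B, C} := by
    ext D
    simp only [mem_image, mem_univ, true_and, mem_insert, mem_singleton]
    constructor
    · rintro ⟨x, rfl⟩
      simp only [φ]
      split_ifs <;> simp
    · rintro (rfl | rfl | rfl)
      exacts [⟨WedgePoset.left, rfl⟩, ⟨WedgePoset.right, rfl⟩, ⟨WedgePoset.top, rfl⟩]
  refine ⟨φ, ?_, himage, ?_⟩
  · have hcard : (Finset.image φ univ).card = (univ : Finset (WedgePoset 2)).card := by
      rw [himage, card_eq_three.mpr ⟨A, B, C, hAB, hAC.ne, hBC.ne, rfl⟩]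
      rfl
    simpa using Finset.card_image_iff.mp hcard
  · rintro x y (rfl | hxy)
    · exact subset_rfl
    · obtain ⟨hx, hy⟩ := Fin.eq_zero_and_eq_one_of_lt hxy
      simp only [φ, hx, hy, if_true, zero_ne_one, if_false]
      split_ifs
      exacts [hAC.subset, hBC.subset]

theorem IsCopy.exists_vee {G : Finset (Finset (Fin n))} (h : IsCopy (VeePoset 2) G) :
    ∃ A ∈ G, ∃ B ∈ G, ∃ C ∈ G, A ⊂ B ∧ A ⊂ C ∧ B ≠ C := by
  obtain ⟨φ, hφ, rfl, hmono⟩ := h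
  have hmem (x) : φ x ∈ Finset.image φ univ := mem_image_of_mem φ (mem_univ x)
  open VeePoset in
  refine ⟨φ bot, hmem bot, φ left, hmem left, φ right, hmem right, ?_, ?_,
    hφ.ne (by decide)⟩
  · exact (hmono bot left (KP.le_of_fst_lt (by decide))).ssubset_of_ne (hφ.ne (by decide))
  · exact (hmono bot right (KP.le_of_fst_lt (by decide))).ssubset_of_ne (hφ.ne (by decide))

theorem IsCopy.exists_wedge {G : Finset (Finset (Fin n))} (h : IsCopy (WedgePoset 2) G) :
    ∃ A ∈ G, ∃ B ∈ G, ∃ C ∈ G, A ⊂ C ∧ B ⊂ C ∧ A ≠ B := by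
  obtain ⟨φ, hφ, rfl, hmono⟩ := h
  have hmem (x) : φ x ∈ Finset.image φ univ := mem_image_of_mem φ (mem_univ x)
  open WedgePoset in
  refine ⟨φ left, hmem left, φ right, hmem right, φ top, hmem top, ?_, ?_,
    hφ.ne (by decide)⟩
  · exact (hmono left top (KP.le_of_fst_lt (by decide))).ssubset_of_ne (hφ.ne (by decide))
  · exact (hmono right top (KP.le_of_fst_lt (by decide))).ssubset_of_ne (hφ.ne (by decide))

theorem copyCount_vee_eq_zero_iff {F : Finset (Finset (Fin n))} :
    copyCount (VeePoset 2) F = 0 ↔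
      ∀ A ∈ F, ∀ B ∈ F, ∀ C ∈ F, A ⊂ B → A ⊂ C → B = C := by
  rw [copyCount_eq_zero_iff]
  constructor
  · intro h A hA B hB C hC hAB hAC
    by_contra hBC
    refine h _ ?_ (isCopy_vee_of_ssubset hAB hAC hBC)
    simp [insert_subset_iff, hA, hB, hC]
  · rintro h G hGF hG
    obtain ⟨A, hA, B, hB, C, hC, hAB, hAC, hBC⟩ := hG.exists_vee
    exact hBC (h A (hGF hA) B (hGF hB) C (hGF hC) hAB hAC)

theorem copyCount_wedge_eq_zero_iff {F : Finset (Finset (Fin n))} :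
    copyCount (WedgePoset 2) F = 0 ↔
      ∀ A ∈ F, ∀ B ∈ F, ∀ C ∈ F, A ⊂ C → B ⊂ C → A = B := by
  rw [copyCount_eq_zero_iff]
  constructor
  · intro h A hA B hB C hC hAC hBC
    by_contra hAB
    refine h _ ?_ (isCopy_wedge_of_ssubset hAC hBC hAB)
    simp [insert_subset_iff, hA, hB, hC]
  · rintro h G hGF hG
    obtain ⟨A, hA, B, hB, C, hC, hAC, hBC, hAB⟩ := hG.exists_wedge
    exact hAB (h A (hGF hA) B (hGF hB) C (hGF hC) hAC hBC)

end Copies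

section StrictPairs

variable {n : ℕ} {F 𝒜 : Finset (Finset (Fin n))}

def strictPairs (F : Finset (Finset (Fin n))) : Finset (Finset (Fin n) × Finset (Fin n)) :=
  (F ×ˢ F).filter fun p => p.1 ⊂ p.2

theorem mem_strictPairs {p : Finset (Fin n) × Finset (Fin n)} :
    p ∈ strictPairs F ↔ p.1 ∈ F ∧ p.2 ∈ F ∧ p.1 ⊂ p.2 := by
  simp [strictPairs, and_assoc]

theorem copyCount_chain_two_eq_card_strictPairs :
    copyCount (PChain 2) F = (strictPairs F).card := by
  have hpair {X Y : Finset (Fin n)} (h : X ⊂ Y) :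
      ({X, Y} : Finset _).inf id = X ∧ ({X, Y} : Finset _).sup id = Y := by
    simp [h.subset]
  symm
  refine card_nbij' (fun p => {p.1, p.2}) (fun G => (G.inf id, G.sup id)) ?_ ?_ ?_ ?_
  · rintro ⟨X, Y⟩ h
    obtain ⟨hX, hY, hXY⟩ := mem_strictPairs.1 h
    simp only [mem_coe, mem_filter, mem_powerset, isCopy_chain_two_iff]
    exact ⟨by simp [insert_subset_iff, hX, hY], X, Y, hXY, rfl⟩
  · intro G hG
    simp only [mem_coe, mem_filter, mem_powerset, isCopy_chain_two_iff] at hG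
    obtain ⟨hGF, X, Y, hXY, rfl⟩ := hG
    simp only [mem_coe, mem_strictPairs, (hpair hXY).1, (hpair hXY).2]
    exact ⟨hGF (by simp), hGF (by simp), hXY⟩
  · rintro ⟨X, Y⟩ h
    obtain ⟨-, -, hXY⟩ := mem_strictPairs.1 h
    simp [hpair hXY]
  · intro G hG
    simp only [mem_coe, mem_filter, mem_powerset, isCopy_chain_two_iff] at hG
    obtain ⟨-, X, Y, hXY, rfl⟩ := hG
    simp [hpair hXY]

theorem card_le_choose_half_of_injOn {ι : Type*} {s : Finset ι} {f : ι → Finset (Fin n)}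
    (hf : Set.InjOn f s) (hanti : IsAntichain (· ⊆ ·) (f '' s)) :
    s.card ≤ n.choose (n / 2) := by
  have hsperner := IsAntichain.sperner (𝒜 := s.image f) (by simpa using hanti)
  rwa [card_image_of_injOn hf, Fintype.card_fin] at hsperner

theorem card_strictPairs_le_of_vee_free
    (hF : ∀ A ∈ F, ∀ B ∈ F, ∀ C ∈ F, A ⊂ B → A ⊂ C → B = C) :
    (strictPairs F).card ≤ n.choose (n / 2) := by
  refine card_le_choose_half_of_injOn (f := Prod.fst) ?_ ?_
  · rintro ⟨A, B⟩ hAB ⟨A', C⟩ hAC (rfl : A = A')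
    obtain ⟨hA, hB, hAB⟩ := mem_strictPairs.1 hAB
    obtain ⟨-, hC, hAC⟩ := mem_strictPairs.1 hAC
    rw [hF A hA B hB C hC hAB hAC]
  · rintro _ ⟨⟨A, B⟩, hAB, rfl⟩ _ ⟨⟨A', B'⟩, hAB', rfl⟩ hne hsub
    obtain ⟨hA, -, -⟩ := mem_strictPairs.1 hAB
    obtain ⟨hA', hB', hAB'⟩ := mem_strictPairs.1 hAB'
    have hAA' : A ⊂ A' := ssubset_of_subset_of_ne hsub hne
    exact hAB'.ne (hF A hA A' hA' B' hB' hAA' (hAA'.trans hAB'))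

theorem card_strictPairs_le_of_wedge_free
    (hF : ∀ A ∈ F, ∀ B ∈ F, ∀ C ∈ F, A ⊂ C → B ⊂ C → A = B) :
    (strictPairs F).card ≤ n.choose (n / 2) := by
  refine card_le_choose_half_of_injOn (f := Prod.snd) ?_ ?_
  · rintro ⟨A, C⟩ hAC ⟨B, C'⟩ hBC (rfl : C = C')
    obtain ⟨hA, hC, hAC⟩ := mem_strictPairs.1 hAC
    obtain ⟨hB, -, hBC⟩ := mem_strictPairs.1 hBC
    rw [hF A hA B hB C hC hAC hBC]
  · rintro _ ⟨⟨A, B⟩, hAB, rfl⟩ _ ⟨⟨A', B'⟩, hAB', rfl⟩ hne hsub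
    obtain ⟨hA, hB, hAB⟩ := mem_strictPairs.1 hAB
    obtain ⟨-, hB', -⟩ := mem_strictPairs.1 hAB'
    have hBB' : B ⊂ B' := ssubset_of_subset_of_ne hsub hne
    exact hAB.ne (hF A hA B hB B' hB' (hAB.trans hBB') hBB')

theorem mem_strictPairs_insert_univ (h𝒜 : IsAntichain (· ⊆ ·) (𝒜 : Set (Finset (Fin n))))
    (hu : univ ∉ 𝒜) {p : Finset (Fin n) × Finset (Fin n)} :
    p ∈ strictPairs (insert univ 𝒜) ↔ p.1 ∈ 𝒜 ∧ p.2 = univ := by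
  rw [mem_strictPairs]
  constructor
  · rintro ⟨h1, h2, h12⟩
    have h1𝒜 : p.1 ∈ 𝒜 :=
      (mem_insert.1 h1).resolve_left (ssubset_univ_iff.1 (h12.trans_subset (subset_univ _)))
    refine ⟨h1𝒜, (mem_insert.1 h2).resolve_right fun h2𝒜 => ?_⟩
    exact h𝒜 h1𝒜 h2𝒜 h12.ne h12.subset
  · rintro ⟨h1, h2⟩
    rw [h2]
    exact ⟨mem_insert_of_mem h1, mem_insert_self _ _,
      ssubset_univ_iff.2 fun h => hu (h ▸ h1)⟩

theorem mem_strictPairs_insert_empty (h𝒜 : IsAntichain (· ⊆ ·) (𝒜 : Set (Finset (Fin n))))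
    (he : ∅ ∉ 𝒜) {p : Finset (Fin n) × Finset (Fin n)} :
    p ∈ strictPairs (insert ∅ 𝒜) ↔ p.1 = ∅ ∧ p.2 ∈ 𝒜 := by
  rw [mem_strictPairs]
  constructor
  · rintro ⟨h1, h2, h12⟩
    have h2𝒜 : p.2 ∈ 𝒜 :=
      (mem_insert.1 h2).resolve_left fun h => by simp [h] at h12
    refine ⟨(mem_insert.1 h1).resolve_right fun h1𝒜 => ?_, h2𝒜⟩
    exact h𝒜 h1𝒜 h2𝒜 h12.ne h12.subset
  · rintro ⟨h1, h2⟩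
    rw [h1]
    exact ⟨mem_insert_self _ _, mem_insert_of_mem h2,
      empty_ssubset.2 (nonempty_iff_ne_empty.2 fun h => he (h ▸ h2))⟩

end StrictPairs

section Extremal

variable {n : ℕ}

theorem card_level (k : ℕ) : (level n k).card = n.choose k := by
  have : level n k = powersetCard k univ := by
    ext A
    simp [level]
  rw [this, card_powersetCard, card_univ, Fintype.card_fin]

theorem isAntichain_level (k : ℕ) : IsAntichain (· ⊆ ·) (level n k : Set (Finset (Fin n))) :=
  Set.Sized.isAntichain fun _ hA => (mem_filter.1 hA).2

theorem copyCount_chain_two_le_of_vee_free {F : Finset (Finset (Fin n))}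
    (hF : copyCount (VeePoset 2) F = 0) : copyCount (PChain 2) F ≤ n.choose (n / 2) := by
  rw [copyCount_chain_two_eq_card_strictPairs]
  exact card_strictPairs_le_of_vee_free (copyCount_vee_eq_zero_iff.1 hF)

theorem copyCount_chain_two_le_of_wedge_free {F : Finset (Finset (Fin n))}
    (hF : copyCount (WedgePoset 2) F = 0) : copyCount (PChain 2) F ≤ n.choose (n / 2) := by
  rw [copyCount_chain_two_eq_card_strictPairs]
  exact card_strictPairs_le_of_wedge_free (copyCount_wedge_eq_zero_iff.1 hF)

theorem exists_vee_free_copyCount_chain_two (hn : 1 ≤ n) :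
    ∃ F : Finset (Finset (Fin n)),
      copyCount (VeePoset 2) F = 0 ∧ copyCount (PChain 2) F = n.choose (n / 2) := by
  have hu : univ ∉ level n (n / 2) := by
    simp only [level, mem_filter, card_univ, Fintype.card_fin]
    omega
  have hmem (p) := mem_strictPairs_insert_univ (p := p) (isAntichain_level (n / 2)) hu
  refine ⟨insert univ (level n (n / 2)), ?_, ?_⟩
  · refine copyCount_vee_eq_zero_iff.2 fun A hA B hB C hC hAB hAC => ?_
    exact ((hmem (A, B)).1 (mem_strictPairs.2 ⟨hA, hB, hAB⟩)).2.trans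
      ((hmem (A, C)).1 (mem_strictPairs.2 ⟨hA, hC, hAC⟩)).2.symm
  · have : strictPairs (insert univ (level n (n / 2))) =
        (level n (n / 2)).image (·, univ) := by
      ext ⟨A, B⟩
      simp [hmem, eq_comm]
    rw [copyCount_chain_two_eq_card_strictPairs, this,
      card_image_of_injective _ (Prod.mk_left_injective _), card_level]

theorem exists_wedge_free_copyCount_chain_two (hn : 1 ≤ n) :
    ∃ F : Finset (Finset (Fin n)),
      copyCount (WedgePoset 2) F = 0 ∧ copyCount (PChain 2) F = n.choose (n / 2) := by
  -- the level `n - n / 2 = ⌈n/2⌉` avoids `∅` even for `n = 1`, where `n / 2 = 0`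
  have he : ∅ ∉ level n (n - n / 2) := by
    simp only [level, mem_filter, card_empty]
    omega
  have hmem (p) := mem_strictPairs_insert_empty (p := p) (isAntichain_level (n - n / 2)) he
  refine ⟨insert ∅ (level n (n - n / 2)), ?_, ?_⟩
  · refine copyCount_wedge_eq_zero_iff.2 fun A hA B hB C hC hAC hBC => ?_
    exact ((hmem (A, C)).1 (mem_strictPairs.2 ⟨hA, hC, hAC⟩)).1.trans
      ((hmem (B, C)).1 (mem_strictPairs.2 ⟨hB, hC, hBC⟩)).1.symm
  · have : strictPairs (insert ∅ (level n (n - n / 2))) =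
        (level n (n - n / 2)).image (∅, ·) := by
      ext ⟨A, B⟩
      simp [hmem, eq_comm, and_comm]
    rw [copyCount_chain_two_eq_card_strictPairs, this,
      card_image_of_injective _ (Prod.mk_right_injective _), card_level,
      Nat.choose_symm (Nat.div_le_self n 2)]

end Extremal

theorem La_eq_of_forall_le_of_exists {n m : ℕ} {P Q : Type} [PartialOrder P] [Fintype P]
    [PartialOrder Q] [Fintype Q]
    (hle : ∀ F : Finset (Finset (Fin n)), copyCount P F = 0 → copyCount Q F ≤ m)
    (hex : ∃ F : Finset (Finset (Fin n)), copyCount P F = 0 ∧ copyCount Q F = m) :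
    La n P Q = m := by
  obtain ⟨F, hF, hQ⟩ := hex
  refine le_antisymm (Finset.sup_le fun F hF => hle F (mem_filter.1 hF).2) ?_
  exact hQ ▸ le_sup (f := copyCount Q) (mem_filter.2 ⟨mem_univ F, hF⟩)

theorem statement0 (n : ℕ) (hn : 1 ≤ n) :
    La n (VeePoset 2) (PChain 2) = n.choose (n / 2) ∧
    La n (WedgePoset 2) (PChain 2) = n.choose (n / 2) :=
  ⟨La_eq_of_forall_le_of_exists (fun _ => copyCount_chain_two_le_of_vee_free)
      (exists_vee_free_copyCount_chain_two hn),
    La_eq_of_forall_le_of_exists (fun _ => copyCount_chain_two_le_of_wedge_free)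
      (exists_wedge_free_copyCount_chain_two hn)⟩

end
end

section
/- Let n ≥ 1, let ℱ ⊆ 2^[n] be an antichain, and let 0 ≤ i < j ≤ n. If j − i is even, then γ²_{i,j}(ℱ) ≤ (1/2)·C(n,j)·C(j,i)·C(j−i, (j−i)/2), and this upper bound equals γ²_{i,j}(binom([n], (i+j)/2)), so it is attained by the full level of size (i+j)/2. If j − i is odd, then γ²_{i,j}(ℱ) ≤ C(n,j)·C(j,i)·C(j−i−1, ⌊(j−i)/2⌋ − 1). -/
open Classical Finset

noncomputable section

namespace NPoset

instance : Fintype NPoset := ⟨{a, b, c, d}, fun x => by cases x <;> simp⟩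

end NPoset

namespace BPlusPoset

instance : Fintype BPlusPoset := ⟨{a, b, c, d, e}, fun x => by cases x <;> simp⟩

end BPlusPoset

namespace BPlusPlusPoset

instance : Fintype BPlusPlusPoset := ⟨{a, b, c, d, e}, fun x => by cases x <;> simp⟩

end BPlusPlusPoset

/-!
Count ordered pairs `(A, B)` of distinct members of `ℱ` instead of two-element subfamilies, and
group them by `(A ∩ B, A ∪ B) = (I, U)`; there are `C(n, j) C(j, i)` such nested pairs `I ⊆ U`.
Within the group of `(I, U)` a pair is determined by `X = A \ I ⊆ U \ I`, since
`B = I ∪ ((U \ I) \ X)`, and these sets `X` form an antichain in `2^(U \ I)` that is closed under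
complementation. If `|U \ I| = 2h`, Sperner's theorem bounds their number by `C(2h, h)`, and the
full level `i + h` attains it. If `|U \ I| = 2m + 1`, the members of size at most `m` form an
intersecting antichain and the others are their complements; pushing its lower layers up (local
LYM) reduces to the Erdős–Ko–Rado theorem for `m`-sets, which gives at most `C(2m, m - 1)`.
-/

open FinsetFamily

namespace Finset

section Extremal

variable {α : Type*} [DecidableEq α] [Fintype α] {𝒜 : Finset (Finset α)} {k m : ℕ}

theorem card_le_card_upShadow_of_sized (h𝒜 : (𝒜 : Set (Finset α)).Sized k)
    (hk : 2 * k < Fintype.card α) : #𝒜 ≤ #(∂⁺ 𝒜) := by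
  have hcompl : ((𝒜ᶜˢ : Finset (Finset α)) : Set (Finset α)).Sized (Fintype.card α - k) := by
    simpa using h𝒜.compls
  have hlym := card_mul_le_card_shadow_mul hcompl
  rw [shadow_compls, card_compls, card_compls,
    show Fintype.card α - (Fintype.card α - k) + 1 = k + 1 by omega] at hlym
  exact Nat.le_of_mul_le_mul_right
    (hlym.trans (Nat.mul_le_mul_left _ (by omega : k + 1 ≤ Fintype.card α - k))) (by omega)

theorem erdos_ko_rado_of_fintype (h𝒜 : (𝒜 : Set (Finset α)).Intersecting)
    (hsized : (𝒜 : Set (Finset α)).Sized k) (hk : k ≤ Fintype.card α / 2) :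
    #𝒜 ≤ (Fintype.card α - 1).choose (k - 1) := by
  let e := (Fintype.equivFin α).toEmbedding
  rw [← card_map (mapEmbedding e).toEmbedding]
  refine erdos_ko_rado ?_ ?_ hk
  · simp only [coe_map, Set.Intersecting, Set.forall_mem_image, RelEmbedding.coe_toEmbedding,
      mapEmbedding_apply, disjoint_map]
    exact h𝒜
  · simp only [coe_map, Set.Sized, Set.forall_mem_image, RelEmbedding.coe_toEmbedding,
      mapEmbedding_apply, card_map]
    exact hsized

def pushUp (𝒜 : Finset (Finset α)) (k : ℕ) : Finset (Finset α) :=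
  {A ∈ 𝒜 | k < #A} ∪ ∂⁺ (𝒜 # k)

theorem exists_subset_of_mem_pushUp {B : Finset α} (hB : B ∈ pushUp 𝒜 k) : ∃ A ∈ 𝒜, A ⊆ B := by
  rcases mem_union.1 hB with hB | hB
  · exact ⟨B, (mem_filter.1 hB).1, subset_rfl⟩
  · obtain ⟨A, hA, hAB⟩ := exists_subset_of_mem_upShadow hB
    exact ⟨A, (mem_slice.1 hA).1, hAB⟩

theorem lt_card_of_mem_pushUp {B : Finset α} (hB : B ∈ pushUp 𝒜 k) : k < #B := by
  rcases mem_union.1 hB with hB | hB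
  · exact (mem_filter.1 hB).2
  · rw [sized_slice.upShadow hB]
    omega

theorem card_le_of_mem_pushUp (hsize : ∀ A ∈ 𝒜, #A ≤ m) (hkm : k < m) {B : Finset α}
    (hB : B ∈ pushUp 𝒜 k) : #B ≤ m := by
  rcases mem_union.1 hB with hB | hB
  · exact hsize B (mem_filter.1 hB).1
  · rw [sized_slice.upShadow hB]
    omega

theorem _root_.Set.Intersecting.pushUp (h𝒜 : (𝒜 : Set (Finset α)).Intersecting) :
    (pushUp 𝒜 k : Set (Finset α)).Intersecting := by
  intro B hB C hC hBC
  obtain ⟨A, hA, hAB⟩ := exists_subset_of_mem_pushUp hB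
  obtain ⟨A', hA', hAC⟩ := exists_subset_of_mem_pushUp hC
  exact h𝒜 hA hA' (hBC.mono hAB hAC)

theorem _root_.IsAntichain.pushUp (h𝒜 : IsAntichain (· ⊆ ·) (𝒜 : Set (Finset α))) :
    IsAntichain (· ⊆ ·) (pushUp 𝒜 k : Set (Finset α)) := by
  intro B hB C hC hne hBC
  have hBC' : B ⊂ C := ssubset_of_subset_of_ne hBC hne
  obtain ⟨A, hA, hAB⟩ := exists_subset_of_mem_pushUp hB
  rcases mem_union.1 hC with hC | hC
  · exact h𝒜 hA (mem_filter.1 hC).1 (ssubset_of_subset_of_ssubset hAB hBC').ne (hAB.trans hBC)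
  · have := card_lt_card hBC'
    have := lt_card_of_mem_pushUp hB
    rw [sized_slice.upShadow hC] at *
    omega

/-- Below the middle level the upper shadow of a layer is at least as large as the layer, and it
is disjoint from the rest of the antichain. -/
theorem card_le_card_pushUp (h𝒜 : IsAntichain (· ⊆ ·) (𝒜 : Set (Finset α)))
    (hsize : ∀ A ∈ 𝒜, k ≤ #A) (hk : 2 * k < Fintype.card α) : #𝒜 ≤ #(pushUp 𝒜 k) := by
  have hdisj : Disjoint {A ∈ 𝒜 | k < #A} (∂⁺ (𝒜 # k)) := by
    refine disjoint_left.2 fun B hB hB' => ?_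
    obtain ⟨hB𝒜, hkB⟩ := mem_filter.1 hB
    obtain ⟨A, hA, hAB⟩ := exists_subset_of_mem_upShadow hB'
    obtain ⟨hA𝒜, hAk⟩ := mem_slice.1 hA
    exact h𝒜 hA𝒜 hB𝒜 (by rintro rfl; omega) hAB
  have hbottom : 𝒜 # k = {A ∈ 𝒜 | ¬ k < #A} := filter_congr fun A hA => by
    have := hsize A hA
    omega
  rw [pushUp, card_union_of_disjoint hdisj, ← card_filter_add_card_filter_not (fun A => k < #A),
    ← hbottom]
  exact Nat.add_le_add_left (card_le_card_upShadow_of_sized sized_slice hk) _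

theorem card_le_of_intersecting_of_isAntichain (h𝒜 : (𝒜 : Set (Finset α)).Intersecting)
    (hanti : IsAntichain (· ⊆ ·) (𝒜 : Set (Finset α))) (hsize : ∀ A ∈ 𝒜, k ≤ #A ∧ #A ≤ m)
    (hm : 2 * m ≤ Fintype.card α) :
    #𝒜 ≤ (Fintype.card α - 1).choose (m - 1) := by
  induction hd : m - k generalizing 𝒜 k with
  | zero =>
    refine erdos_ko_rado_of_fintype h𝒜 (fun A hA => ?_) (by omega)
    have := hsize A hA
    omega
  | succ d ih =>
    have hkm : k < m := by omega
    refine (card_le_card_pushUp hanti (fun A hA => (hsize A hA).1) (by omega)).trans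
      (ih h𝒜.pushUp hanti.pushUp (fun B hB => ⟨lt_card_of_mem_pushUp hB, ?_⟩) (by omega))
    exact card_le_of_mem_pushUp (fun A hA => (hsize A hA).2) hkm hB

/-- The members of size at most `m` form an intersecting family: if two of them `A, B` were
disjoint, then `A ⊆ Bᶜ` with `Bᶜ ∈ 𝒜` strictly larger. The others are their complements. -/
theorem card_le_of_isAntichain_of_compl_mem (hα : Fintype.card α = 2 * m + 1)
    (hanti : IsAntichain (· ⊆ ·) (𝒜 : Set (Finset α))) (hcompl : ∀ A ∈ 𝒜, Aᶜ ∈ 𝒜) :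
    #𝒜 ≤ 2 * (2 * m).choose (m - 1) := by
  set small := {A ∈ 𝒜 | #A ≤ m}
  have hsmall : (small : Set (Finset α)).Intersecting := by
    intro A hA B hB hAB
    obtain ⟨hA𝒜, hAm⟩ := mem_filter.1 hA
    obtain ⟨hB𝒜, hBm⟩ := mem_filter.1 hB
    have hBc : #Bᶜ = 2 * m + 1 - #B := by rw [card_compl, hα]
    exact hanti hA𝒜 (hcompl B hB𝒜) (by rintro rfl; omega) (subset_compl_iff_disjoint_right.2 hAB)
  have hcover : 𝒜 ⊆ small ∪ smallᶜˢ := by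
    intro A hA
    by_cases hAm : #A ≤ m
    · exact mem_union_left _ (mem_filter.2 ⟨hA, hAm⟩)
    · refine mem_union_right _ (mem_compls.2 (mem_filter.2 ⟨hcompl A hA, ?_⟩))
      rw [card_compl, hα]
      omega
  have hbound : #small ≤ (2 * m).choose (m - 1) := by
    have := card_le_of_intersecting_of_isAntichain (k := 0) hsmall
      (hanti.subset (filter_subset _ _)) (fun A hA => ⟨Nat.zero_le _, (mem_filter.1 hA).2⟩)
      (by omega)
    rwa [hα, Nat.add_sub_cancel] at this
  calc #𝒜 ≤ #small + #smallᶜˢ := (card_le_card hcover).trans (card_union_le _ _)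
    _ ≤ 2 * (2 * m).choose (m - 1) := by rw [card_compls]; omega

end Extremal

section Split

variable {α : Type*} [DecidableEq α] {I U A B : Finset α}

def unionLift (I U : Finset α) (X : Finset ↥(U \ I)) : Finset α :=
  I ∪ X.map (Function.Embedding.subtype _)

theorem mem_unionLift {X : Finset ↥(U \ I)} {x : α} :
    x ∈ unionLift I U X ↔ x ∈ I ∨ ∃ h : x ∈ U \ I, ⟨x, h⟩ ∈ X := by
  simp [unionLift]

theorem unionLift_subset_unionLift_iff {X Y : Finset ↥(U \ I)} :
    unionLift I U X ⊆ unionLift I U Y ↔ X ⊆ Y := by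
  refine ⟨fun h x hx => ?_, fun h => union_subset_union subset_rfl (map_subset_map.2 h)⟩
  have hxI : (x : α) ∉ I := (mem_sdiff.1 x.2).2
  obtain hI | ⟨_, hY⟩ := mem_unionLift.1 (h (mem_unionLift.2 (Or.inr ⟨x.2, hx⟩)))
  · exact absurd hI hxI
  · exact hY

theorem unionLift_injective : Function.Injective (unionLift I U) := fun _ _ h =>
  subset_antisymm (unionLift_subset_unionLift_iff.1 h.le) (unionLift_subset_unionLift_iff.1 h.ge)

theorem card_unionLift (X : Finset ↥(U \ I)) : #(unionLift I U X) = #I + #X := by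
  rw [unionLift, card_union_of_disjoint, card_map]
  refine disjoint_left.2 fun x hxI hx => ?_
  obtain ⟨y, -, rfl⟩ := mem_map.1 hx
  exact (mem_sdiff.1 y.2).2 hxI

theorem unionLift_inter_unionLift_compl (X : Finset ↥(U \ I)) :
    unionLift I U X ∩ unionLift I U Xᶜ = I := by
  ext x
  simp only [mem_inter, mem_unionLift, mem_compl]
  grind

theorem unionLift_union_unionLift_compl (hIU : I ⊆ U) (X : Finset ↥(U \ I)) :
    unionLift I U X ∪ unionLift I U Xᶜ = U := by
  ext x
  simp only [mem_union, mem_unionLift, mem_compl]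
  have := @hIU x
  grind

def splitPair (I U : Finset α) (X : Finset ↥(U \ I)) : Finset α × Finset α :=
  (unionLift I U X, unionLift I U Xᶜ)

theorem splitPair_injective : Function.Injective (splitPair I U) := fun _ _ h =>
  unionLift_injective (congrArg Prod.fst h)

theorem splitPair_filter_mem (hA : A ∩ B = I) (hB : A ∪ B = U) :
    splitPair I U {x | ↑x ∈ A} = (A, B) := by
  have hI : ∀ x, x ∈ I ↔ x ∈ A ∧ x ∈ B := fun x => by rw [← hA, mem_inter]
  have hU : ∀ x, x ∈ U ↔ x ∈ A ∨ x ∈ B := fun x => by rw [← hB, mem_union]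
  ext x
  · simp only [splitPair, mem_unionLift, mem_filter, mem_univ, true_and, exists_prop,
      mem_sdiff, hI, hU]
    tauto
  · simp only [splitPair, mem_unionLift, mem_compl, mem_filter, mem_univ, true_and, exists_prop,
      mem_sdiff, hI, hU]
    tauto

def splitSets (F : Finset (Finset α)) (I U : Finset α) : Finset (Finset ↥(U \ I)) :=
  {X | splitPair I U X ∈ F.offDiag}

theorem mem_splitSets {F : Finset (Finset α)} {X : Finset ↥(U \ I)} :
    X ∈ splitSets F I U ↔ splitPair I U X ∈ F.offDiag := by
  simp [splitSets]

theorem filter_offDiag_eq_map_splitSets (F : Finset (Finset α)) (hIU : I ⊆ U) :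
    {p ∈ F.offDiag | p.1 ∩ p.2 = I ∧ p.1 ∪ p.2 = U} =
      (splitSets F I U).map ⟨splitPair I U, splitPair_injective⟩ := by
  ext p
  simp only [mem_filter, mem_map, mem_splitSets, Function.Embedding.coeFn_mk]
  constructor
  · rintro ⟨hp, hA, hB⟩
    exact ⟨_, by rwa [splitPair_filter_mem hA hB], splitPair_filter_mem hA hB⟩
  · rintro ⟨X, hX, rfl⟩
    exact ⟨hX, unionLift_inter_unionLift_compl X, unionLift_union_unionLift_compl hIU X⟩

variable {F : Finset (Finset α)}

theorem _root_.IsAntichain.splitSets (hF : IsAntichain (· ⊆ ·) (F : Set (Finset α))) :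
    IsAntichain (· ⊆ ·) (splitSets F I U : Set (Finset ↥(U \ I))) := by
  intro X hX Y hY hne hXY
  rw [mem_coe, mem_splitSets, mem_offDiag] at hX hY
  exact hne (unionLift_injective
    (hF.eq hX.1 hY.1 (unionLift_subset_unionLift_iff.2 hXY)))

theorem compl_mem_splitSets {X : Finset ↥(U \ I)} (hX : X ∈ splitSets F I U) :
    Xᶜ ∈ splitSets F I U := by
  simp only [mem_splitSets, mem_offDiag, splitPair, compl_compl] at hX ⊢
  exact ⟨hX.2.1, hX.1, hX.2.2.symm⟩

theorem splitSets_powersetCard [Fintype α] {r : ℕ} (hUI : #(U \ I) = 2 * r) (hr : 0 < r) :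
    splitSets (powersetCard (#I + r) univ) I U = powersetCard r univ := by
  have hS : Fintype.card ↥(U \ I) = 2 * r := by rw [Fintype.card_coe, hUI]
  have : Nonempty ↥(U \ I) := Fintype.card_pos_iff.1 (by omega)
  ext X
  simp only [mem_splitSets, splitPair, mem_offDiag, mem_powersetCard, subset_univ, true_and,
    card_unionLift, card_compl, hS, Nat.add_left_cancel_iff, Ne, unionLift_injective.eq_iff]
  exact ⟨fun hX => hX.1, fun hX => ⟨hX, by omega, ne_compl_self⟩⟩

end Split

theorem two_mul_card_filter_powersetCard_two {β : Type*} [DecidableEq β] (s : Finset β)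
    (P : Finset β → Prop) [DecidablePred P] :
    2 * #{G ∈ s.powersetCard 2 | P G} = #{p ∈ s.offDiag | P {p.1, p.2}} := by
  have hmaps : ∀ p ∈ {p ∈ s.offDiag | P {p.1, p.2}},
      ({p.1, p.2} : Finset β) ∈ {G ∈ s.powersetCard 2 | P G} := by
    intro p hp
    obtain ⟨⟨h1, h2, hne⟩, hP⟩ := by simpa only [mem_filter, mem_offDiag] using hp
    exact mem_filter.2 ⟨mem_powersetCard.2 ⟨insert_subset h1 (singleton_subset_iff.2 h2),
      card_pair hne⟩, hP⟩
  rw [card_eq_sum_card_fiberwise hmaps, mul_comm, ← smul_eq_mul, ← sum_const]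
  refine sum_congr rfl fun G hG => ?_
  obtain ⟨hGs, hP⟩ := mem_filter.1 hG
  obtain ⟨a, b, hab, rfl⟩ := card_eq_two.1 (mem_powersetCard.1 hGs).2
  have ha : a ∈ s := (mem_powersetCard.1 hGs).1 (mem_insert_self a _)
  have hb : b ∈ s := (mem_powersetCard.1 hGs).1 (mem_insert_of_mem (mem_singleton_self b))
  refine (card_eq_two.2 ⟨(a, b), (b, a), fun h => hab (congrArg Prod.fst h), ?_⟩).symm
  ext ⟨x, y⟩
  simp only [mem_filter, mem_offDiag, mem_insert, mem_singleton, Prod.mk.injEq,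
    ← coe_inj, coe_pair, Set.pair_eq_pair_iff]
  constructor
  · rintro ⟨-, h⟩
    exact h
  · rintro (⟨rfl, rfl⟩ | ⟨rfl, rfl⟩)
    · exact ⟨⟨⟨ha, hb, hab⟩, hP⟩, Or.inl ⟨rfl, rfl⟩⟩
    · exact ⟨⟨⟨hb, ha, Ne.symm hab⟩, by rwa [pair_comm] at hP⟩, Or.inr ⟨rfl, rfl⟩⟩

end Finset

theorem two_mul_gammaCount_two {n : ℕ} (i j : ℕ) (F : Finset (Finset (Fin n))) :
    2 * gammaCount 2 n i j F =
      ∑ U ∈ powersetCard j univ, ∑ I ∈ U.powersetCard i, #(splitSets F I U) := by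
  have hpairs : gammaCount 2 n i j F =
      #{G ∈ F.powersetCard 2 | #(G.inf id) = i ∧ #(G.sup id) = j} := by
    rw [gammaCount, powersetCard_eq_filter, filter_filter]
  rw [hpairs, two_mul_card_filter_powersetCard_two]
  simp only [inf_insert, inf_singleton, sup_insert, sup_singleton, id, inf_eq_inter,
    sup_eq_union]
  let key : Finset (Fin n) × Finset (Fin n) → Σ _ : Finset (Fin n), Finset (Fin n) :=
    fun p => ⟨p.1 ∪ p.2, p.1 ∩ p.2⟩
  calc #{p ∈ F.offDiag | #(p.1 ∩ p.2) = i ∧ #(p.1 ∪ p.2) = j}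
      = #{p ∈ F.offDiag | key p ∈ (powersetCard j univ).sigma (powersetCard i)} := by
        congr 1
        refine filter_congr fun p _ => ?_
        simp only [key, mem_sigma, mem_powersetCard, subset_univ, true_and]
        have : p.1 ∩ p.2 ⊆ p.1 ∪ p.2 := inter_subset_left.trans subset_union_left
        tauto
    _ = ∑ q ∈ (powersetCard j univ).sigma (powersetCard i), #{p ∈ F.offDiag | key p = q} :=
        (sum_card_fiberwise_eq_card_filter _ _ _).symm
    _ = ∑ U ∈ powersetCard j univ, ∑ I ∈ U.powersetCard i, #(splitSets F I U) := by
        rw [sum_sigma]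
        refine sum_congr rfl fun U _ => sum_congr rfl fun I hI => ?_
        rw [← card_map ⟨splitPair I U, splitPair_injective⟩,
          ← filter_offDiag_eq_map_splitSets F (mem_powersetCard.1 hI).1]
        congr 1
        refine filter_congr fun p _ => ?_
        simp only [key, Sigma.mk.injEq, heq_eq_eq]
        tauto

theorem sum_powersetCard_powersetCard_const (n i j c : ℕ) :
    ∑ U ∈ powersetCard j (univ : Finset (Fin n)), ∑ _I ∈ U.powersetCard i, c =
      n.choose j * j.choose i * c := by
  rw [sum_const_nat fun U hU => by rw [sum_const, card_powersetCard, (mem_powersetCard.1 hU).2,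
    smul_eq_mul], card_powersetCard, card_univ, Fintype.card_fin, mul_assoc]

theorem two_mul_gammaCount_two_le {n i j c : ℕ} {F : Finset (Finset (Fin n))}
    (hc : ∀ I U : Finset (Fin n), I ⊆ U → #I = i → #U = j → #(splitSets F I U) ≤ c) :
    2 * gammaCount 2 n i j F ≤ n.choose j * j.choose i * c := by
  rw [two_mul_gammaCount_two, ← sum_powersetCard_powersetCard_const]
  refine sum_le_sum fun U hU => sum_le_sum fun I hI => ?_
  rw [mem_powersetCard] at hU hI
  exact hc I U hI.1 hI.2 hU.2

theorem level_eq_powersetCard (n k : ℕ) : level n k = powersetCard k univ := by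
  ext A
  simp [level]

theorem statement8_general (n : ℕ) (F : Finset (Finset (Fin n)))
    (hF : IsAntichain (· ⊆ ·) (↑F : Set (Finset (Fin n))))
    (i j : ℕ) (hij : i < j) :
    ((j - i) % 2 = 0 →
      2 * gammaCount 2 n i j F ≤ n.choose j * j.choose i * (j - i).choose ((j - i) / 2) ∧
      2 * gammaCount 2 n i j (level n ((i + j) / 2)) =
        n.choose j * j.choose i * (j - i).choose ((j - i) / 2)) ∧
    ((j - i) % 2 = 1 →
      gammaCount 2 n i j F ≤
        n.choose j * j.choose i * (j - i - 1).choose ((j - i) / 2 - 1)) := by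
  have hcard : ∀ I U : Finset (Fin n), I ⊆ U → #I = i → #U = j →
      #(U \ I) = j - i := fun I U hIU hI hU => by
    rw [card_sdiff_of_subset hIU, hI, hU]
  refine ⟨fun heven => ⟨?_, ?_⟩, fun hodd => ?_⟩
  · refine two_mul_gammaCount_two_le fun I U hIU hI hU => ?_
    simpa only [Fintype.card_coe, hcard I U hIU hI hU] using (hF.splitSets (I := I) (U := U)).sperner
  · rw [two_mul_gammaCount_two, ← sum_powersetCard_powersetCard_const]
    refine sum_congr rfl fun U hU => sum_congr rfl fun I hI => ?_
    rw [mem_powersetCard] at hU hI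
    have hUI := hcard I U hI.1 hI.2 hU.2
    rw [level_eq_powersetCard, show (i + j) / 2 = #I + (j - i) / 2 by omega,
      splitSets_powersetCard (by omega) (by omega), card_powersetCard, card_univ,
      Fintype.card_coe, hUI]
  · refine Nat.le_of_mul_le_mul_left ?_ two_pos
    rw [mul_left_comm]
    refine two_mul_gammaCount_two_le fun I U hIU hI hU => ?_
    have := card_le_of_isAntichain_of_compl_mem (m := (j - i) / 2)
      (by rw [Fintype.card_coe, hcard I U hIU hI hU]; omega) hF.splitSets fun X hX => compl_mem_splitSets hX
    rwa [show 2 * ((j - i) / 2) = j - i - 1 by omega] at this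

theorem statement8 (n : ℕ) (hn : 1 ≤ n) (F : Finset (Finset (Fin n)))
    (hF : IsAntichain (· ⊆ ·) (↑F : Set (Finset (Fin n))))
    (i j : ℕ) (hij : i < j) (hj : j ≤ n) :
    ((j - i) % 2 = 0 →
      2 * gammaCount 2 n i j F ≤ n.choose j * j.choose i * (j - i).choose ((j - i) / 2) ∧
      2 * gammaCount 2 n i j (level n ((i + j) / 2)) =
        n.choose j * j.choose i * (j - i).choose ((j - i) / 2)) ∧
    ((j - i) % 2 = 1 →
      gammaCount 2 n i j F ≤
        n.choose j * j.choose i * (j - i - 1).choose ((j - i) / 2 - 1)) :=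
  statement8_general n F hF i j hij
end
end
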